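/- Let k ≥ 1 be an integer and c ≥ 1 a real number, and set I_k(T) = ∫₀^T |ζ(1/2+it)|^{2k} dt and L_k(σ) = ∫₀^∞ |ζ(1/2+ix)|^{2k} e^{−σx} dx for σ > 0. Then the following are equivalent: (a) for every ε > 0 there is a constant C(ε) such that I_k(T) ≤ C(ε)·T^{c+ε} for all T ≥ 1; (b) for every ε > 0 there is a constant C'(ε) such that L_k(σ) converges and L_k(σ) ≤ C'(ε)·σ^{−c−ε} for all 0 < σ ≤ 1. -/
import Mathlib


open MeasureTheory Set Complex Filter

/-- `|ζ(1/2 + i x)|^(2k)` -/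
noncomputable def zetaPow (k : ℕ) (x : ℝ) : ℝ :=
  ‖riemannZeta (1/2 + x * Complex.I)‖ ^ (2 * k)

lemma zetaPow_cont (k : ℕ) : Continuous (zetaPow k) := by
  apply Continuous.pow
  apply Continuous.norm
  apply continuous_iff_continuousAt.2
  intro x
  have h1 : ((1:ℂ)/2 + x * Complex.I) ≠ 1 := by
    intro h
    have := congrArg Complex.re h
    simp at this
  have hg : ContinuousAt (fun x : ℝ => (1:ℂ)/2 + x * Complex.I) x := by fun_prop
  exact ContinuousAt.comp (x := x) (g := riemannZeta)
    (differentiableAt_riemannZeta h1).continuousAt hg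

lemma zetaPow_nonneg (k : ℕ) (x : ℝ) : 0 ≤ zetaPow k x := by
  unfold zetaPow; positivity


lemma weight_summable (m : ℕ) :
    Summable (fun n : ℕ => Real.exp (-(n:ℝ)) * ((n:ℝ)+1)^m) := by
  have hq : ‖Real.exp (-1)‖ < 1 := by
    rw [Real.norm_eq_abs, abs_of_pos (Real.exp_pos _)]
    have := Real.exp_lt_exp.mpr (show (-1:ℝ) < 0 by norm_num)
    simpa using this
  have h0 : Summable (fun n : ℕ => (n:ℝ)^m * Real.exp (-1) ^ n) :=
    summable_pow_mul_geometric_of_norm_lt_one m hq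
  have h1 : Summable (fun n : ℕ => ((n+1:ℕ):ℝ)^m * Real.exp (-1) ^ (n+1)) :=
    (summable_nat_add_iff 1).mpr h0
  have h2 := h1.mul_left (Real.exp 1)
  apply h2.congr
  intro n
  have e1 : Real.exp 1 * Real.exp (-1) = 1 := by
    rw [← Real.exp_add]; norm_num
  have e2 : Real.exp (-(n:ℝ)) = Real.exp (-1) ^ n := by
    rw [← Real.exp_nat_mul]; ring_nf
  push_cast
  rw [e2, pow_succ, show Real.exp 1 * (((n:ℝ)+1)^m * (Real.exp (-1) ^ n * Real.exp (-1)))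
      = (Real.exp 1 * Real.exp (-1)) * (((n:ℝ)+1)^m * Real.exp (-1) ^ n) by ring, e1, one_mul]
  ring

-- the decomposition of Ioi 0
lemma iUnion_blocks (σ : ℝ) (hσ : 0 < σ) :
    Ioi (0:ℝ) = ⋃ n : ℕ, Ioc ((n:ℝ)/σ) (((n:ℝ)+1)/σ) := by
  ext x
  simp only [mem_Ioi, mem_iUnion, mem_Ioc]
  constructor
  · intro hx
    have hpos : 0 < x * σ := mul_pos hx hσ
    have h1 : 1 ≤ ⌈x * σ⌉₊ := Nat.one_le_iff_ne_zero.mpr (by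
      intro h; have := Nat.ceil_eq_zero.mp h; linarith)
    refine ⟨⌈x * σ⌉₊ - 1, ?_, ?_⟩
    · have hcast : ((⌈x * σ⌉₊ - 1 : ℕ) : ℝ) = (⌈x * σ⌉₊ : ℝ) - 1 := by
        push_cast [Nat.cast_sub h1]; ring
      rw [div_lt_iff₀ hσ, hcast]
      have := Nat.ceil_lt_add_one (le_of_lt hpos)
      linarith
    · have hcast : ((⌈x * σ⌉₊ - 1 : ℕ) : ℝ) + 1 = (⌈x * σ⌉₊ : ℝ) := by
        push_cast [Nat.cast_sub h1]; ring
      rw [le_div_iff₀ hσ, hcast]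
      exact Nat.le_ceil _
  · rintro ⟨n, hn1, _⟩
    have : (0:ℝ) ≤ (n:ℝ)/σ := div_nonneg (Nat.cast_nonneg n) (le_of_lt hσ)
    linarith

lemma blocks_disjoint (σ : ℝ) (hσ : 0 < σ) :
    Pairwise (Function.onFun Disjoint
      (fun n : ℕ => Ioc ((n:ℝ)/σ) (((n:ℝ)+1)/σ))) := by
  intro m n hmn
  rw [Function.onFun, Set.Ioc_disjoint_Ioc]
  rcases hmn.lt_or_gt with h | h
  · have h' : (m:ℝ) + 1 ≤ (n:ℝ) := by exact_mod_cast h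
    calc ((m:ℝ)+1)/σ ⊓ ((n:ℝ)+1)/σ ≤ ((m:ℝ)+1)/σ := inf_le_left
      _ ≤ (n:ℝ)/σ := by gcongr
      _ ≤ (m:ℝ)/σ ⊔ (n:ℝ)/σ := le_sup_right
  · have h' : (n:ℝ) + 1 ≤ (m:ℝ) := by exact_mod_cast h
    calc ((m:ℝ)+1)/σ ⊓ ((n:ℝ)+1)/σ ≤ ((n:ℝ)+1)/σ := inf_le_right
      _ ≤ (m:ℝ)/σ := by gcongr
      _ ≤ (m:ℝ)/σ ⊔ (n:ℝ)/σ := le_sup_left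

theorem stmt17 (k : ℕ) (hk : 1 ≤ k) (c : ℝ) (hc : 1 ≤ c) :
    (∀ ε > (0:ℝ), ∃ C : ℝ, ∀ T ≥ (1:ℝ),
      (∫ t in (0:ℝ)..T, zetaPow k t) ≤ C * T ^ (c + ε)) ↔
    (∀ ε > (0:ℝ), ∃ C' : ℝ, ∀ σ : ℝ, 0 < σ → σ ≤ 1 →
      IntegrableOn (fun x : ℝ => zetaPow k x * Real.exp (-σ * x)) (Ioi (0:ℝ)) ∧
      (∫ x in Ioi (0:ℝ), zetaPow k x * Real.exp (-σ * x)) ≤ C' * σ ^ (-c - ε)) := by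
  constructor
  · intro h
    intro ε hε
    obtain ⟨C, hC⟩ := h ε hε
    set a : ℝ := c + ε with ha
    have ha1 : 1 ≤ a := by simp [ha]; linarith
    set m : ℕ := ⌈a⌉₊ with hm
    have ham : a ≤ (m:ℝ) := Nat.le_ceil a
    set S : ℝ := ∑' n : ℕ, Real.exp (-(n:ℝ)) * ((n:ℝ)+1)^m with hS
    have hSnn : 0 ≤ S := tsum_nonneg fun n =>
      mul_nonneg (Real.exp_nonneg _) (pow_nonneg (by positivity) m)
    have hC0 : 0 ≤ C := by
      have h1 := hC 1 le_rfl
      have h2 : (0:ℝ) ≤ ∫ t in (0:ℝ)..1, zetaPow k t :=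
        intervalIntegral.integral_nonneg (by norm_num) (fun x _ => zetaPow_nonneg k x)
      rw [Real.one_rpow] at h1
      linarith
    refine ⟨C * S, fun σ hσ0 hσ1 => ?_⟩
    set g : ℝ → ℝ := fun x => zetaPow k x * Real.exp (-σ * x) with hg
    have hgcont : Continuous g := by apply (zetaPow_cont k).mul; fun_prop
    have hgnn : ∀ x, 0 ≤ g x := fun x =>
      mul_nonneg (zetaPow_nonneg k x) (Real.exp_nonneg _)
    have hσa : (0:ℝ) ≤ σ ^ (-a) := Real.rpow_nonneg (le_of_lt hσ0) _
    -- the key lintegral bound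
    have key : ∫⁻ x in Ioi (0:ℝ), ENNReal.ofReal (g x) ≤ ENNReal.ofReal (C * S * σ ^ (-a)) := by
      rw [iUnion_blocks σ hσ0, lintegral_iUnion
        (fun n => measurableSet_Ioc) (blocks_disjoint σ hσ0)]
      have block : ∀ n : ℕ, ∫⁻ x in Ioc ((n:ℝ)/σ) (((n:ℝ)+1)/σ), ENNReal.ofReal (g x)
          ≤ ENNReal.ofReal (C * σ ^ (-a)) * ENNReal.ofReal (Real.exp (-(n:ℝ)) * ((n:ℝ)+1)^m) := by
        intro n
        set T : ℝ := ((n:ℝ)+1)/σ with hT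
        have hT1 : (1:ℝ) ≤ T := by
          rw [hT, le_div_iff₀ hσ0]
          have : (0:ℝ) ≤ (n:ℝ) := Nat.cast_nonneg n
          linarith
        have hT0 : (0:ℝ) ≤ T := le_trans zero_le_one hT1
        have step1 : ∫⁻ x in Ioc ((n:ℝ)/σ) T, ENNReal.ofReal (g x)
            ≤ ∫⁻ x in Ioc ((n:ℝ)/σ) T, ENNReal.ofReal (Real.exp (-(n:ℝ)) * zetaPow k x) := by
          apply setLIntegral_mono
          · apply Measurable.ennreal_ofReal
            exact (continuous_const.mul (zetaPow_cont k)).measurable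
          · intro x hx
            apply ENNReal.ofReal_le_ofReal
            have hxn : (n:ℝ) ≤ σ * x := by
              have := hx.1
              rw [div_lt_iff₀ hσ0] at this
              linarith [this]
            have : Real.exp (-σ * x) ≤ Real.exp (-(n:ℝ)) := by
              apply Real.exp_le_exp.2; linarith
            calc g x = zetaPow k x * Real.exp (-σ * x) := rfl
              _ ≤ zetaPow k x * Real.exp (-(n:ℝ)) :=
                  mul_le_mul_of_nonneg_left this (zetaPow_nonneg k x)
              _ = Real.exp (-(n:ℝ)) * zetaPow k x := mul_comm _ _
        have step2 : ∫⁻ x in Ioc ((n:ℝ)/σ) T, ENNReal.ofReal (Real.exp (-(n:ℝ)) * zetaPow k x)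
            ≤ ENNReal.ofReal (Real.exp (-(n:ℝ))) * ∫⁻ x in Ioc (0:ℝ) T, ENNReal.ofReal (zetaPow k x) := by
          have heq : ∀ x, ENNReal.ofReal (Real.exp (-(n:ℝ)) * zetaPow k x)
              = ENNReal.ofReal (Real.exp (-(n:ℝ))) * ENNReal.ofReal (zetaPow k x) := fun x =>
            ENNReal.ofReal_mul (Real.exp_nonneg _)
          simp_rw [heq]
          rw [lintegral_const_mul _ ((zetaPow_cont k).measurable.ennreal_ofReal)]
          apply mul_le_mul_right
          apply lintegral_mono_set
          apply Ioc_subset_Ioc_left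
          exact div_nonneg (Nat.cast_nonneg n) (le_of_lt hσ0)
        have step3 : ∫⁻ x in Ioc (0:ℝ) T, ENNReal.ofReal (zetaPow k x)
            = ENNReal.ofReal (∫ t in (0:ℝ)..T, zetaPow k t) := by
          rw [intervalIntegral.integral_of_le hT0]
          rw [ofReal_integral_eq_lintegral_ofReal ((zetaPow_cont k).integrableOn_Ioc)
            (Filter.Eventually.of_forall fun x => zetaPow_nonneg k x)]
        have step4 : (∫ t in (0:ℝ)..T, zetaPow k t) ≤ C * T ^ a := hC T hT1
        have hTa : T ^ a ≤ ((n:ℝ)+1)^m * σ ^ (-a) := by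
          have h1 : T ^ a = ((n:ℝ)+1) ^ a * σ ^ (-a) := by
            rw [hT, div_eq_mul_inv, Real.mul_rpow (by positivity) (by positivity),
              Real.inv_rpow (le_of_lt hσ0), ← Real.rpow_neg (le_of_lt hσ0)]
          rw [h1]
          apply mul_le_mul_of_nonneg_right _ hσa
          calc ((n:ℝ)+1) ^ a ≤ ((n:ℝ)+1) ^ (m:ℝ) :=
                Real.rpow_le_rpow_of_exponent_le (by linarith [Nat.cast_nonneg (α := ℝ) n]) ham
            _ = ((n:ℝ)+1) ^ m := Real.rpow_natCast _ m
        calc ∫⁻ x in Ioc ((n:ℝ)/σ) T, ENNReal.ofReal (g x)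
            ≤ ENNReal.ofReal (Real.exp (-(n:ℝ))) * ENNReal.ofReal (∫ t in (0:ℝ)..T, zetaPow k t) := by
              rw [← step3]; exact step1.trans step2
          _ ≤ ENNReal.ofReal (Real.exp (-(n:ℝ))) * ENNReal.ofReal (C * (((n:ℝ)+1)^m * σ ^ (-a))) := by
              apply mul_le_mul_right
              apply ENNReal.ofReal_le_ofReal
              calc (∫ t in (0:ℝ)..T, zetaPow k t) ≤ C * T ^ a := step4
                _ ≤ C * (((n:ℝ)+1)^m * σ ^ (-a)) := mul_le_mul_of_nonneg_left hTa hC0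
          _ = ENNReal.ofReal (C * σ ^ (-a)) * ENNReal.ofReal (Real.exp (-(n:ℝ)) * ((n:ℝ)+1)^m) := by
              rw [← ENNReal.ofReal_mul (Real.exp_nonneg _), ← ENNReal.ofReal_mul (by positivity)]
              ring_nf
      calc ∑' n : ℕ, ∫⁻ x in Ioc ((n:ℝ)/σ) (((n:ℝ)+1)/σ), ENNReal.ofReal (g x)
          ≤ ∑' n : ℕ, ENNReal.ofReal (C * σ ^ (-a)) * ENNReal.ofReal (Real.exp (-(n:ℝ)) * ((n:ℝ)+1)^m) :=
            ENNReal.tsum_le_tsum block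
        _ = ENNReal.ofReal (C * σ ^ (-a)) * ∑' n : ℕ, ENNReal.ofReal (Real.exp (-(n:ℝ)) * ((n:ℝ)+1)^m) :=
            ENNReal.tsum_mul_left
        _ = ENNReal.ofReal (C * σ ^ (-a)) * ENNReal.ofReal S := by
            rw [hS, ENNReal.ofReal_tsum_of_nonneg
              (fun n => mul_nonneg (Real.exp_nonneg _) (pow_nonneg (by positivity) m))
              (weight_summable m)]
        _ = ENNReal.ofReal (C * S * σ ^ (-a)) := by
            rw [← ENNReal.ofReal_mul (by positivity)]
            ring_nf
    have hglt : ∫⁻ x in Ioi (0:ℝ), ENNReal.ofReal (g x) < ⊤ :=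
      lt_of_le_of_lt key ENNReal.ofReal_lt_top
    have hmeas : AEStronglyMeasurable g (volume.restrict (Ioi (0:ℝ))) :=
      hgcont.aestronglyMeasurable
    have hint : IntegrableOn g (Ioi (0:ℝ)) := by
      refine ⟨hmeas, ?_⟩
      rw [hasFiniteIntegral_iff_ofReal (Filter.Eventually.of_forall hgnn)]
      exact hglt
    refine ⟨hint, ?_⟩
    have heq : (∫ x in Ioi (0:ℝ), g x)
        = (∫⁻ x in Ioi (0:ℝ), ENNReal.ofReal (g x)).toReal :=
      integral_eq_lintegral_of_nonneg_ae (Filter.Eventually.of_forall hgnn) hmeas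
    rw [heq]
    have hfinal : C * S * σ ^ (-c - ε) = C * S * σ ^ (-a) := by
      rw [ha]; ring_nf
    rw [hfinal]
    exact ENNReal.toReal_le_of_le_ofReal (by positivity) key
  · intro h
    intro ε hε
    obtain ⟨C', hC'⟩ := h ε hε
    refine ⟨Real.exp 1 * C', fun T hT => ?_⟩
    have hT0 : (0:ℝ) < T := lt_of_lt_of_le one_pos hT
    set σ : ℝ := T⁻¹ with hσdef
    have hσ0 : 0 < σ := inv_pos.2 hT0
    have hσ1 : σ ≤ 1 := inv_le_one_of_one_le₀ hT
    obtain ⟨hInt, hBound⟩ := hC' σ hσ0 hσ1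
    set g : ℝ → ℝ := fun x => zetaPow k x * Real.exp (-σ * x) with hg
    have hgcont : Continuous g := by
      apply (zetaPow_cont k).mul
      fun_prop
    have step1 : (∫ t in (0:ℝ)..T, zetaPow k t) ≤ ∫ t in (0:ℝ)..T, Real.exp 1 * g t := by
      apply intervalIntegral.integral_mono_on (le_of_lt hT0)
      · exact (zetaPow_cont k).intervalIntegrable _ _
      · exact (continuous_const.mul hgcont).intervalIntegrable _ _
      · intro x hx
        have hx0 : 0 ≤ x := hx.1
        have hxT : x ≤ T := hx.2
        have h1 : -σ * x ≥ -1 := by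
          have : σ * x ≤ 1 := by
            calc σ * x ≤ σ * T := by nlinarith
            _ = 1 := by rw [hσdef]; field_simp
          linarith
        have h2 : Real.exp (-1) ≤ Real.exp (-σ * x) := Real.exp_le_exp.2 h1
        have h3 : 1 ≤ Real.exp 1 * Real.exp (-σ * x) := by
          rw [← Real.exp_add]
          calc (1:ℝ) = Real.exp 0 := (Real.exp_zero).symm
          _ ≤ _ := Real.exp_le_exp.2 (by linarith)
        calc zetaPow k x = zetaPow k x * 1 := (mul_one _).symm
          _ ≤ zetaPow k x * (Real.exp 1 * Real.exp (-σ * x)) :=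
              mul_le_mul_of_nonneg_left h3 (zetaPow_nonneg k x)
          _ = Real.exp 1 * g x := by rw [hg]; ring
    have step2 : (∫ t in (0:ℝ)..T, Real.exp 1 * g t)
        = Real.exp 1 * ∫ t in Ioc (0:ℝ) T, g t := by
      rw [intervalIntegral.integral_const_mul, intervalIntegral.integral_of_le (le_of_lt hT0)]
    have step3 : (∫ t in Ioc (0:ℝ) T, g t) ≤ ∫ x in Ioi (0:ℝ), g x := by
      apply setIntegral_mono_set hInt
      · exact Filter.Eventually.of_forall fun x =>
          mul_nonneg (zetaPow_nonneg k x) (Real.exp_nonneg _)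
      · exact (Ioc_subset_Ioi_self).eventuallyLE
    have hσrw : σ ^ (-c - ε) = T ^ (c + ε) := by
      rw [hσdef, ← Real.rpow_neg_one T, ← Real.rpow_mul (le_of_lt hT0)]
      ring_nf
    calc (∫ t in (0:ℝ)..T, zetaPow k t) ≤ Real.exp 1 * ∫ t in Ioc (0:ℝ) T, g t :=
          step1.trans (le_of_eq step2)
      _ ≤ Real.exp 1 * (C' * σ ^ (-c - ε)) := by
          have := mul_le_mul_of_nonneg_left (step3.trans hBound) (Real.exp_nonneg 1)
          exact this
      _ = Real.exp 1 * C' * T ^ (c + ε) := by rw [hσrw]; ring
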